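/- arXiv:1111.1992 — 3 statements merged into one kernel-verified Lean document; each statement's English description precedes it below -/
import Mathlib

section
/- Let γ > 0 and δ ∈ [0,1]. Then D((δ+γ)/(1+γ) || γ/(1+γ)) ≥ δ²/(2γ) − δ³/(6γ²(1+γ)), where D(p||q) = p·ln(p/q) + (1−p)·ln((1−p)/(1−q)) is the binary relative entropy. -/
/-!
For `p = (δ + γ)/(1 + γ)` and `q = γ/(1 + γ)` one has `p/q = 1 + δ/γ` and
`(1 - p)/(1 - q) = 1 - δ`, so `(1 + γ) D(p‖q) = γ φ(δ/γ) + ψ(δ)` with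
`φ x = (1 + x) log (1 + x)` and `ψ y = (1 - y) log (1 - y)`. The Taylor lower bounds
`φ x ≥ x + x²/2 - x³/6` and `ψ y ≥ -y + y²/2`, each obtained from a nonnegative derivative
on `[0, x]`, add up exactly to the claimed bound.
-/

/-- Binary relative entropy (natural logarithm), with the convention
`0 · ln 0 = 0` (automatic since `Real.log 0 = 0` in Mathlib). -/
noncomputable def binKL (p q : ℝ) : ℝ :=
  p * Real.log (p / q) + (1 - p) * Real.log ((1 - p) / (1 - q))

open Real Set

lemma le_of_hasDerivAt_nonneg {f f' : ℝ → ℝ} {a b : ℝ} (hab : a ≤ b)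
    (hf : ContinuousOn f (Icc a b)) (hf' : ∀ x ∈ Ioo a b, HasDerivAt f (f' x) x)
    (hf'₀ : ∀ x ∈ Ioo a b, 0 ≤ f' x) : f a ≤ f b :=
  monotoneOn_of_hasDerivWithinAt_nonneg (convex_Icc a b) hf
    (by simpa using fun x hx ↦ (hf' x hx).hasDerivWithinAt) (by simpa using hf'₀)
    (left_mem_Icc.2 hab) (right_mem_Icc.2 hab) hab

lemma sub_sq_div_two_le_log_one_add {x : ℝ} (hx : 0 ≤ x) : x - x ^ 2 / 2 ≤ log (1 + x) := by
  have hderiv : ∀ t, 0 ≤ t →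
      HasDerivAt (fun t ↦ log (1 + t) - t + t ^ 2 / 2) (t ^ 2 / (1 + t)) t := by
    intro t ht
    have h := ((((hasDerivAt_id t).const_add 1).log (by positivity)).sub (hasDerivAt_id t)).add
      ((hasDerivAt_pow 2 t).div_const 2)
    refine h.congr_deriv ?_
    simp only [id]
    field_simp
    ring
  have := le_of_hasDerivAt_nonneg hx
    (fun t ht ↦ (hderiv t ht.1).continuousAt.continuousWithinAt)
    (fun t ht ↦ hderiv t ht.1.le) (fun t ht ↦ by have := ht.1; positivity)
  simp only [add_zero, log_one] at this
  linarith

lemma cubic_le_one_add_mul_log_one_add {x : ℝ} (hx : 0 ≤ x) :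
    x + x ^ 2 / 2 - x ^ 3 / 6 ≤ (1 + x) * log (1 + x) := by
  have hderiv : ∀ t, 0 ≤ t →
      HasDerivAt (fun t ↦ (1 + t) * log (1 + t) - t - t ^ 2 / 2 + t ^ 3 / 6)
        (log (1 + t) - (t - t ^ 2 / 2)) t := by
    intro t ht
    have h := (((((hasDerivAt_id t).const_add 1).mul (((hasDerivAt_id t).const_add 1).log
      (by positivity))).sub (hasDerivAt_id t)).sub ((hasDerivAt_pow 2 t).div_const 2)).add
      ((hasDerivAt_pow 3 t).div_const 6)
    refine h.congr_deriv ?_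
    simp only [id]
    field_simp
    ring
  have := le_of_hasDerivAt_nonneg hx
    (fun t ht ↦ (hderiv t ht.1).continuousAt.continuousWithinAt)
    (fun t ht ↦ hderiv t ht.1.le)
    (fun t ht ↦ sub_nonneg.2 (sub_sq_div_two_le_log_one_add ht.1.le))
  simp only [add_zero, log_one, mul_zero] at this
  linarith

lemma sq_le_one_sub_mul_log_one_sub {y : ℝ} (hy0 : 0 ≤ y) (hy1 : y ≤ 1) :
    -y + y ^ 2 / 2 ≤ (1 - y) * log (1 - y) := by
  have hderiv : ∀ t, t < 1 → HasDerivAt (fun t ↦ (1 - t) * log (1 - t) + t - t ^ 2 / 2)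
      (-log (1 - t) - t) t := by
    intro t ht
    have h1t : 1 - t ≠ 0 := sub_ne_zero.2 ht.ne'
    have h := ((((hasDerivAt_id t).const_sub 1).mul (((hasDerivAt_id t).const_sub 1).log
      h1t)).add (hasDerivAt_id t)).sub ((hasDerivAt_pow 2 t).div_const 2)
    refine h.congr_deriv ?_
    simp only [id]
    field_simp
    ring
  have hcont : Continuous fun t : ℝ ↦ (1 - t) * log (1 - t) + t - t ^ 2 / 2 :=
    ((continuous_mul_log.comp (continuous_sub_left 1)).add continuous_id).sub (by fun_prop)
  have := le_of_hasDerivAt_nonneg hy0 hcont.continuousOn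
    (fun t ht ↦ hderiv t (by linarith [ht.2]))
    (fun t ht ↦ by linarith [log_le_sub_one_of_pos (by linarith [ht.2] : 0 < 1 - t)])
  simp only [sub_zero, log_one, mul_zero] at this
  linarith

lemma binKL_shift {γ δ : ℝ} (hγ : 0 < γ) :
    binKL ((δ + γ) / (1 + γ)) (γ / (1 + γ)) =
      (γ * ((1 + δ / γ) * log (1 + δ / γ)) + (1 - δ) * log (1 - δ)) / (1 + γ) := by
  have h1γ : 1 + γ ≠ 0 := by positivity
  have hp : (δ + γ) / (1 + γ) / (γ / (1 + γ)) = 1 + δ / γ := by field_simp; ring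
  have h1p : 1 - (δ + γ) / (1 + γ) = (1 - δ) / (1 + γ) := by field_simp; ring
  have h1q : 1 - γ / (1 + γ) = 1 / (1 + γ) := by field_simp; ring
  rw [binKL, hp, h1p, h1q, div_div_div_cancel_right₀ h1γ, div_one]
  field_simp
  ring

theorem stmt_2 (γ δ : ℝ) (hγ : 0 < γ) (hδ0 : 0 ≤ δ) (hδ1 : δ ≤ 1) :
    δ ^ 2 / (2 * γ) - δ ^ 3 / (6 * γ ^ 2 * (1 + γ)) ≤
      binKL ((δ + γ) / (1 + γ)) (γ / (1 + γ)) := by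
  rw [binKL_shift hγ, le_div_iff₀ (by positivity)]
  have hA := cubic_le_one_add_mul_log_one_add (div_nonneg hδ0 hγ.le)
  have hB := sq_le_one_sub_mul_log_one_sub hδ0 hδ1
  calc (δ ^ 2 / (2 * γ) - δ ^ 3 / (6 * γ ^ 2 * (1 + γ))) * (1 + γ)
      = γ * (δ / γ + (δ / γ) ^ 2 / 2 - (δ / γ) ^ 3 / 6) + (-δ + δ ^ 2 / 2) := by
        field_simp; ring
    _ ≤ _ := add_le_add (mul_le_mul_of_nonneg_left hA hγ.le) hB
end

section
/- Let X₀, X₁, …, Xₙ be a real-valued martingale with respect to a filtration F₀ ⊆ F₁ ⊆ … ⊆ Fₙ such that, for some constants d, σ > 0 and every k ∈ {1,…,n}, almost surely |Xₖ − Xₖ₋₁| ≤ d and E[(Xₖ − Xₖ₋₁)² | Fₖ₋₁] ≤ σ². Set γ = σ²/d² and δ = α/d for α ≥ 0. If δ ≤ 1, then P(|Xₙ − X₀| ≥ αn) ≤ 2·exp(−n·D((δ+γ)/(1+γ) || γ/(1+γ))), where D is the binary relative entropy with natural logarithm. -/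
open MeasureTheory

/-!
Bennett's argument. For `t ≥ 0`, the map `y ↦ exp (t * y)` is dominated on `(-∞, d]` by the
quadratic that is tangent to it at `y = -γ d` and meets it at `y = d`. Taking conditional
expectations, an increment with conditional mean zero, bounded above by `d` and with conditional
variance at most `γ d²` has conditional moment generating function at most
`φ(t) = (γ exp (t d) + exp (-t γ d)) / (1 + γ)`, the moment generating function of the two-point
law on `{d, -γ d}` with these moments. The tower property then gives
`E exp (t (Xₙ - X₀)) ≤ φ(t)ⁿ`, and Chernoff's bound at the optimal
`t = log ((δ + γ) / (γ (1 - δ))) / (d (1 + γ))` is exactly `exp (-n D(…))`.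
Applying this to `X` and `-X` gives the two-sided bound.
-/

open ProbabilityTheory Filter Topology Real

-- `(exp x - 1 - x) / x ^ 2`, as a power series so that it is also defined and monotone at `0`
noncomputable def expTail (x : ℝ) : ℝ := ∑' n : ℕ, x ^ n / (n + 2).factorial

lemma summable_expTail (x : ℝ) : Summable fun n : ℕ => x ^ n / (n + 2).factorial := by
  refine .of_norm_bounded (summable_pow_div_factorial |x|) fun n => ?_
  rw [norm_div, norm_pow, norm_eq_abs, RCLike.norm_natCast]
  exact div_le_div_of_nonneg_left (by positivity) (by positivity)
    (mod_cast Nat.factorial_le (by omega))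

lemma exp_eq_one_add_add_sq_mul_expTail (x : ℝ) : exp x = 1 + x + x ^ 2 * expTail x := by
  rw [exp_eq_exp_ℝ, NormedSpace.exp_eq_tsum_div]
  beta_reduce
  rw [← (summable_pow_div_factorial x).sum_add_tsum_nat_add 2, expTail, ← tsum_mul_left]
  simp only [Finset.sum_range_succ, Finset.sum_range_zero, pow_add]
  norm_num
  exact tsum_congr fun n => by ring

lemma expTail_mono {u T : ℝ} (hu : 0 ≤ u) (huT : u ≤ T) : expTail u ≤ expTail T :=
  Summable.tsum_le_tsum (fun n => by gcongr) (summable_expTail u) (summable_expTail T)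

lemma one_half_le_expTail {T : ℝ} (hT : 0 ≤ T) : 1 / 2 ≤ expTail T := by
  simpa [expTail] using (summable_expTail T).le_tsum 0 fun n _ => by positivity

lemma exp_le_one_add_add_sq_div_two {u : ℝ} (hu : u ≤ 0) : exp u ≤ 1 + u + u ^ 2 / 2 := by
  -- `(1 + u + u ^ 2 / 2) * (1 - u + u ^ 2 / 2) = 1 + u ^ 4 / 4 ≥ exp u * exp (-u)`
  have hexp_neg := quadratic_le_exp_of_nonneg (neg_nonneg.2 hu)
  have hinv : exp u * exp (-u) = 1 := by rw [← exp_add, add_neg_cancel, exp_zero]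
  nlinarith [exp_pos u, sq_nonneg (u ^ 2)]

lemma exp_le_one_add_add_expTail_mul_sq {u T : ℝ} (hu : u ≤ T) (hT : 0 ≤ T) :
    exp u ≤ 1 + u + expTail T * u ^ 2 := by
  rcases le_or_gt u 0 with hu0 | hu0
  · nlinarith [exp_le_one_add_add_sq_div_two hu0, one_half_le_expTail hT, sq_nonneg u]
  · rw [exp_eq_one_add_add_sq_mul_expTail u]
    nlinarith [expTail_mono hu0.le hu, sq_nonneg u]

noncomputable def bennettMGF (γ d t : ℝ) : ℝ :=
  (γ * exp (t * d) + exp (-(t * γ * d))) / (1 + γ)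

lemma bennettMGF_pos {γ : ℝ} (hγ : 0 ≤ γ) (d t : ℝ) : 0 < bennettMGF γ d t := by
  unfold bennettMGF
  positivity

lemma exists_quadratic_ge_exp_mul {γ d t : ℝ} (hγ : 0 ≤ γ) (hd : 0 ≤ d) (ht : 0 ≤ t) :
    ∃ a b c : ℝ, 0 ≤ c ∧ a + c * (γ * d ^ 2) = bennettMGF γ d t ∧
      ∀ y ≤ d, exp (t * y) ≤ a + b * y + c * y ^ 2 := by
  have hT : 0 ≤ t * (d * (1 + γ)) := by positivity
  have hS := one_half_le_expTail hT
  refine ⟨exp (-(t * γ * d)) * (1 + t * γ * d + expTail (t * (d * (1 + γ))) * (t * γ * d) ^ 2),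
    exp (-(t * γ * d)) * (t + 2 * expTail (t * (d * (1 + γ))) * t * (t * γ * d)),
    exp (-(t * γ * d)) * expTail (t * (d * (1 + γ))) * t ^ 2, by positivity, ?_, fun y hy => ?_⟩
  · have hST := exp_eq_one_add_add_sq_mul_expTail (t * (d * (1 + γ)))
    have hE : exp (-(t * γ * d)) * exp (t * (d * (1 + γ))) = exp (t * d) := by
      rw [← exp_add]; ring_nf
    unfold bennettMGF
    field_simp
    linear_combination (norm := ring_nf) (-exp (-(t * γ * d)) * γ) * hST + γ * hE
  · have hu : t * (y + γ * d) ≤ t * (d * (1 + γ)) := mul_le_mul_of_nonneg_left (by nlinarith) ht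
    calc exp (t * y) = exp (-(t * γ * d)) * exp (t * (y + γ * d)) := by rw [← exp_add]; ring_nf
      _ ≤ exp (-(t * γ * d)) * (1 + t * (y + γ * d)
            + expTail (t * (d * (1 + γ))) * (t * (y + γ * d)) ^ 2) := by
        gcongr
        exact exp_le_one_add_add_expTail_mul_sq hu hT
      _ = _ := by ring

section Optimization

variable {γ d δ : ℝ}

lemma binKL_eq_mul_log_add_log (hγ : 0 < γ) (hδ0 : 0 ≤ δ) (hδ1 : δ < 1) :
    binKL ((δ + γ) / (1 + γ)) (γ / (1 + γ)) =
      (δ + γ) / (1 + γ) * log ((δ + γ) / (γ * (1 - δ))) + log (1 - δ) := by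
  have h1δ : 1 - δ ≠ 0 := by linarith
  have hδγ : δ + γ ≠ 0 := by linarith
  have hratio : (δ + γ) / (1 + γ) / (γ / (1 + γ)) = (δ + γ) / γ := by field_simp
  have hcompl : 1 - (δ + γ) / (1 + γ) = (1 - δ) / (1 + γ) := by field_simp; ring
  have hratio' : (1 - δ) / (1 + γ) / (1 - γ / (1 + γ)) = 1 - δ := by field_simp; ring
  rw [binKL, hratio, hcompl, hratio', log_div hδγ hγ.ne', log_div hδγ (by positivity),
    log_mul hγ.ne' h1δ]
  field_simp
  ring

lemma exists_exp_neg_mul_bennettMGF_eq (hγ : 0 < γ) (hd : 0 < d) (hδ0 : 0 ≤ δ) (hδ1 : δ < 1) :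
    ∃ t, 0 ≤ t ∧ exp (-(t * (δ * d))) * bennettMGF γ d t =
      exp (-binKL ((δ + γ) / (1 + γ)) (γ / (1 + γ))) := by
  have h1δ : 0 < 1 - δ := by linarith
  set L := log ((δ + γ) / (γ * (1 - δ)))
  have hexpL : exp L = (δ + γ) / (γ * (1 - δ)) := exp_log (by positivity)
  have hL : 0 ≤ L := log_nonneg (by rw [le_div_iff₀ (by positivity)]; nlinarith)
  refine ⟨L / (1 + γ) / d, by positivity, ?_⟩
  set u := L / (1 + γ)
  have hLu : L = u + γ * u := by simp only [u]; field_simp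
  have hpL : (δ + γ) / (1 + γ) * L = δ * u + γ * u := by simp only [u]; field_simp
  have hexpu : exp u = (δ + γ) / (γ * (1 - δ)) * exp (-(γ * u)) := by
    rw [← hexpL, hLu, ← exp_add]
    ring_nf
  rw [binKL_eq_mul_log_add_log hγ hδ0 hδ1, hpL, bennettMGF, div_mul_cancel₀ u hd.ne',
    show u / d * γ * d = γ * u by field_simp, show u / d * (δ * d) = δ * u by field_simp,
    neg_add, exp_add, neg_add, exp_add, exp_neg (log _), exp_log h1δ, hexpu]
  field_simp
  ring

lemma tendsto_exp_neg_mul_bennettMGF (hγ : 0 ≤ γ) (hd : 0 < d) :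
    Tendsto (fun t => exp (-(t * d)) * bennettMGF γ d t) atTop (𝓝 (γ / (1 + γ))) := by
  have h1γ : 1 + γ ≠ 0 := by positivity
  have hrw (t : ℝ) : exp (-(t * d)) * bennettMGF γ d t
      = (γ + exp (-(t * (d * (1 + γ))))) / (1 + γ) := by
    have hcancel : exp (-(t * d)) * exp (t * d) = 1 := by rw [← exp_add, neg_add_cancel, exp_zero]
    have hprod : exp (-(t * d)) * exp (-(t * γ * d)) = exp (-(t * (d * (1 + γ)))) := by
      rw [← exp_add]; ring_nf
    rw [bennettMGF]
    field_simp
    linear_combination (norm := ring_nf) γ * hcancel + hprod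
  have hexp : Tendsto (fun t => exp (-(t * (d * (1 + γ))))) atTop (𝓝 0) :=
    tendsto_exp_atBot.comp (tendsto_neg_atTop_atBot.comp
      (tendsto_id.atTop_mul_const (by positivity)))
  simpa only [hrw, add_zero] using (hexp.const_add γ).div_const (1 + γ)

lemma le_exp_neg_mul_binKL_of_forall_le (hγ : 0 < γ) (hd : 0 < d) (hδ0 : 0 ≤ δ) (hδ1 : δ ≤ 1)
    {x : ℝ} {n : ℕ} (hx : ∀ t, 0 ≤ t → x ≤ (exp (-(t * (δ * d))) * bennettMGF γ d t) ^ n) :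
    x ≤ exp (-n * binKL ((δ + γ) / (1 + γ)) (γ / (1 + γ))) := by
  rw [neg_mul, ← mul_neg, exp_nat_mul]
  rcases hδ1.lt_or_eq with hδ1 | rfl
  · obtain ⟨t, ht, heq⟩ := exists_exp_neg_mul_bennettMGF_eq hγ hd hδ0 hδ1
    exact heq ▸ hx t ht
  -- for `δ = 1` the infimum over `t` is only attained in the limit `t → ∞`
  · have hKL : exp (-binKL ((1 + γ) / (1 + γ)) (γ / (1 + γ))) = γ / (1 + γ) := by
      simp only [div_self (by positivity : 1 + γ ≠ 0), binKL, sub_self, zero_mul, add_zero,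
        one_mul, one_div, log_inv, neg_neg]
      exact exp_log (by positivity)
    rw [hKL]
    refine ge_of_tendsto ((tendsto_exp_neg_mul_bennettMGF hγ.le hd).pow n) ?_
    filter_upwards [eventually_ge_atTop 0] with t ht
    simpa only [one_mul] using hx t ht

end Optimization

section CondExp

variable {Ω : Type*} {m m0 : MeasurableSpace Ω} {μ : Measure Ω} [IsFiniteMeasure μ]

lemma condExp_quadratic_le (hm : m ≤ m0) {Y : Ω → ℝ} (hY : Integrable Y μ)
    (hY2 : Integrable (fun ω => Y ω ^ 2) μ) (hmean : μ[Y|m] =ᵐ[μ] 0) {v : ℝ}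
    (hvar : μ[fun ω => Y ω ^ 2|m] ≤ᵐ[μ] fun _ => v) (a b : ℝ) {c : ℝ} (hc : 0 ≤ c) :
    μ[fun ω => a + b * Y ω + c * Y ω ^ 2|m] ≤ᵐ[μ] fun _ => a + c * v := by
  have hsplit : (fun ω => a + b * Y ω + c * Y ω ^ 2)
      = ((fun _ => a) + b • Y) + c • fun ω => Y ω ^ 2 := rfl
  rw [hsplit]
  filter_upwards [condExp_add ((integrable_const a).add (hY.smul b)) (hY2.smul c) m,
    condExp_add (integrable_const a) (hY.smul b) m, condExp_smul b Y m,
    condExp_smul c (fun ω => Y ω ^ 2) m, hmean, hvar] with ω h_add h_add' h_smul h_smul' h0 hv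
  simp only [Pi.add_apply, Pi.smul_apply, smul_eq_mul, Pi.zero_apply]
    at h_add h_add' h_smul h_smul' h0 ⊢
  rw [h_add, h_add', h_smul, h_smul', condExp_const hm a, h0, mul_zero, add_zero]
  gcongr

lemma condExp_exp_mul_le_bennettMGF (hm : m ≤ m0) {Y : Ω → ℝ} (hY : Integrable Y μ)
    (hY2 : Integrable (fun ω => Y ω ^ 2) μ) {γ d t : ℝ} (hγ : 0 ≤ γ) (hd : 0 ≤ d) (ht : 0 ≤ t)
    (hYd : ∀ᵐ ω ∂μ, Y ω ≤ d) (hmean : μ[Y|m] =ᵐ[μ] 0)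
    (hvar : μ[fun ω => Y ω ^ 2|m] ≤ᵐ[μ] fun _ => γ * d ^ 2) :
    μ[fun ω => exp (t * Y ω)|m] ≤ᵐ[μ] fun _ => bennettMGF γ d t := by
  obtain ⟨a, b, c, hc, habc, hquad⟩ := exists_quadratic_ge_exp_mul hγ hd ht
  have hexp : Integrable (fun ω => exp (t * Y ω)) μ := by
    refine .of_bound (continuous_exp.comp_aestronglyMeasurable
      (hY.aestronglyMeasurable.const_mul t)) (exp (t * d)) ?_
    filter_upwards [hYd] with ω hω
    rw [norm_of_nonneg (exp_pos _).le]
    gcongr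
  rw [← habc]
  refine (condExp_mono hexp (((integrable_const a).add (hY.const_mul b)).add (hY2.const_mul c))
    ?_).trans (condExp_quadratic_le hm hY hY2 hmean hvar a b hc)
  filter_upwards [hYd] with ω hω using hquad _ hω

lemma integral_mul_le_of_condExp_le (hm : m ≤ m0) {f g : Ω → ℝ} (hf : StronglyMeasurable[m] f)
    (hf0 : 0 ≤ f) (hfi : Integrable f μ) (hg : Integrable g μ) (hfg : Integrable (f * g) μ)
    {c : ℝ} (hgc : μ[g|m] ≤ᵐ[μ] fun _ => c) :
    ∫ ω, f ω * g ω ∂μ ≤ (∫ ω, f ω ∂μ) * c := by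
  have hpull := condExp_mul_of_stronglyMeasurable_left hf hfg hg
  calc ∫ ω, f ω * g ω ∂μ = ∫ ω, (μ[f * g|m]) ω ∂μ := (integral_condExp hm).symm
    _ = ∫ ω, f ω * (μ[g|m]) ω ∂μ := integral_congr_ae hpull
    _ ≤ ∫ ω, f ω * c ∂μ := by
      refine integral_mono_ae (integrable_condExp.congr hpull) (hfi.mul_const c) ?_
      filter_upwards [hgc] with ω hω using mul_le_mul_of_nonneg_left hω (hf0 ω)
    _ = (∫ ω, f ω ∂μ) * c := integral_mul_const c f

end CondExp

section Adapted

variable {Ω : Type*} {m0 : MeasurableSpace Ω} {μ : Measure Ω} [IsProbabilityMeasure μ]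
  {ℱ : Filtration ℕ m0} {X : ℕ → Ω → ℝ}

lemma integral_exp_mul_sub_le_pow (hX : StronglyAdapted ℱ X)
    {t c d : ℝ} (hc : 0 ≤ c) (n : ℕ) (hbdd : ∀ k < n, ∀ᵐ ω ∂μ, |X (k + 1) ω - X k ω| ≤ d)
    (hmgf : ∀ k < n, μ[fun ω => exp (t * (X (k + 1) ω - X k ω))|ℱ k] ≤ᵐ[μ] fun _ => c) :
    Integrable (fun ω => exp (t * (X n ω - X 0 ω))) μ ∧
      ∫ ω, exp (t * (X n ω - X 0 ω)) ∂μ ≤ c ^ n := by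
  induction n with
  | zero => simp
  | succ k ih =>
    obtain ⟨hfi, hf_le⟩ := ih (fun j hj => hbdd j (by omega)) (fun j hj => hmgf j (by omega))
    have hf : StronglyMeasurable[ℱ k] fun ω => exp (t * (X k ω - X 0 ω)) :=
      continuous_exp.comp_stronglyMeasurable
        (((hX k).sub ((hX 0).mono (ℱ.mono k.zero_le))).const_mul t)
    have hX_meas (j : ℕ) : StronglyMeasurable[m0] (X j) := (hX j).mono (ℱ.le j)
    have hg_meas : AEStronglyMeasurable (fun ω => exp (t * (X (k + 1) ω - X k ω))) μ :=
      continuous_exp.comp_aestronglyMeasurable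
        (((hX_meas (k + 1)).sub (hX_meas k)).const_mul t).aestronglyMeasurable
    have hg_bdd : ∀ᵐ ω ∂μ, ‖exp (t * (X (k + 1) ω - X k ω))‖ ≤ exp (|t| * d) := by
      filter_upwards [hbdd k k.lt_succ_self] with ω hω
      rw [norm_of_nonneg (exp_pos _).le, exp_le_exp]
      calc t * (X (k + 1) ω - X k ω) ≤ |t| * |X (k + 1) ω - X k ω| :=
            (le_abs_self _).trans (abs_mul _ _).le
        _ ≤ |t| * d := by gcongr
    have hprod : (fun ω => exp (t * (X (k + 1) ω - X 0 ω)))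
        = (fun ω => exp (t * (X k ω - X 0 ω))) * fun ω => exp (t * (X (k + 1) ω - X k ω)) := by
      ext ω
      rw [Pi.mul_apply, ← exp_add]
      ring_nf
    have hfg : Integrable (fun ω => exp (t * (X (k + 1) ω - X 0 ω))) μ :=
      hprod ▸ hfi.mul_bdd hg_meas hg_bdd
    refine ⟨hfg, ?_⟩
    calc ∫ ω, exp (t * (X (k + 1) ω - X 0 ω)) ∂μ
        = ∫ ω, exp (t * (X k ω - X 0 ω)) * exp (t * (X (k + 1) ω - X k ω)) ∂μ := by
          rw [hprod]; rfl
      _ ≤ (∫ ω, exp (t * (X k ω - X 0 ω)) ∂μ) * c :=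
          integral_mul_le_of_condExp_le (ℱ.le k) hf (fun ω => (exp_pos _).le) hfi
            (.of_bound hg_meas _ hg_bdd) (hprod ▸ hfg) (hmgf k k.lt_succ_self)
      _ ≤ c ^ (k + 1) := by rw [pow_succ]; gcongr

end Adapted

namespace MeasureTheory.Martingale

variable {Ω : Type*} {m0 : MeasurableSpace Ω} {μ : Measure Ω} {ℱ : Filtration ℕ m0}
  {X : ℕ → Ω → ℝ} {γ d δ : ℝ} {n : ℕ}

lemma condExp_succ_sub_ae_eq_zero [IsFiniteMeasure μ] (hX : Martingale X ℱ μ) (k : ℕ) :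
    μ[fun ω => X (k + 1) ω - X k ω|ℱ k] =ᵐ[μ] 0 := by
  have hXk := condExp_of_stronglyMeasurable (ℱ.le k) (hX.stronglyAdapted k) (hX.integrable k)
  filter_upwards [condExp_sub (hX.integrable (k + 1)) (hX.integrable k) (ℱ k),
    hX.condExp_ae_eq k.le_succ] with ω h_sub h_succ
  rw [show (fun ω => X (k + 1) ω - X k ω) = X (k + 1) - X k from rfl, h_sub, Pi.sub_apply,
    h_succ, hXk, sub_self, Pi.zero_apply]

lemma condExp_exp_mul_succ_sub_le [IsFiniteMeasure μ] (hX : Martingale X ℱ μ)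
    {t : ℝ} (hγ : 0 ≤ γ) (hd : 0 ≤ d) (ht : 0 ≤ t) {k : ℕ}
    (hb : ∀ᵐ ω ∂μ, |X (k + 1) ω - X k ω| ≤ d)
    (hv : μ[fun ω => (X (k + 1) ω - X k ω) ^ 2|ℱ k] ≤ᵐ[μ] fun _ => γ * d ^ 2) :
    μ[fun ω => exp (t * (X (k + 1) ω - X k ω))|ℱ k] ≤ᵐ[μ] fun _ => bennettMGF γ d t := by
  have hY := (hX.integrable (k + 1)).sub (hX.integrable k)
  have hY2 : Integrable (fun ω => (X (k + 1) ω - X k ω) ^ 2) μ := by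
    refine .of_bound (hY.aestronglyMeasurable.pow 2) (d ^ 2) ?_
    filter_upwards [hb] with ω hω
    rw [norm_pow, norm_eq_abs]
    gcongr
  exact condExp_exp_mul_le_bennettMGF (ℱ.le k) hY hY2 hγ hd ht
    (hb.mono fun ω hω => (le_abs_self _).trans hω) (hX.condExp_succ_sub_ae_eq_zero k) hv

theorem measureReal_ge_le_exp_mul_bennettMGF_pow [IsProbabilityMeasure μ]
    (hX : Martingale X ℱ μ) (hγ : 0 ≤ γ) (hd : 0 ≤ d)
    (hbdd : ∀ k < n, ∀ᵐ ω ∂μ, |X (k + 1) ω - X k ω| ≤ d)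
    (hvar : ∀ k < n, μ[fun ω => (X (k + 1) ω - X k ω) ^ 2|ℱ k] ≤ᵐ[μ] fun _ => γ * d ^ 2)
    (α : ℝ) {t : ℝ} (ht : 0 ≤ t) :
    μ.real {ω | α * n ≤ X n ω - X 0 ω} ≤ (exp (-(t * α)) * bennettMGF γ d t) ^ n := by
  obtain ⟨hint, hle⟩ := integral_exp_mul_sub_le_pow hX.stronglyAdapted
    (bennettMGF_pos hγ d t).le n hbdd
    fun k hk => hX.condExp_exp_mul_succ_sub_le hγ hd ht (hbdd k hk) (hvar k hk)
  calc μ.real {ω | α * n ≤ X n ω - X 0 ω}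
      ≤ exp (-t * (α * n)) * ∫ ω, exp (t * (X n ω - X 0 ω)) ∂μ :=
        measure_ge_le_exp_mul_mgf _ ht hint
    _ ≤ exp (-t * (α * n)) * bennettMGF γ d t ^ n := by gcongr
    _ = (exp (-(t * α)) * bennettMGF γ d t) ^ n := by
        rw [mul_pow, ← exp_nat_mul]
        ring_nf

theorem measureReal_ge_le_exp_neg_mul_binKL [IsProbabilityMeasure μ] (hX : Martingale X ℱ μ)
    (hγ : 0 < γ) (hd : 0 < d) (hδ0 : 0 ≤ δ) (hδ1 : δ ≤ 1)
    (hbdd : ∀ k < n, ∀ᵐ ω ∂μ, |X (k + 1) ω - X k ω| ≤ d)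
    (hvar : ∀ k < n, μ[fun ω => (X (k + 1) ω - X k ω) ^ 2|ℱ k] ≤ᵐ[μ] fun _ => γ * d ^ 2) :
    μ.real {ω | δ * d * n ≤ X n ω - X 0 ω} ≤
      exp (-n * binKL ((δ + γ) / (1 + γ)) (γ / (1 + γ))) :=
  le_exp_neg_mul_binKL_of_forall_le hγ hd hδ0 hδ1 fun _ ht =>
    hX.measureReal_ge_le_exp_mul_bennettMGF_pow hγ.le hd.le hbdd hvar _ ht

theorem measureReal_abs_sub_ge_le_two_mul_exp_neg_mul_binKL [IsProbabilityMeasure μ]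
    (hX : Martingale X ℱ μ) (hγ : 0 < γ) (hd : 0 < d) (hδ0 : 0 ≤ δ) (hδ1 : δ ≤ 1)
    (hbdd : ∀ k < n, ∀ᵐ ω ∂μ, |X (k + 1) ω - X k ω| ≤ d)
    (hvar : ∀ k < n, μ[fun ω => (X (k + 1) ω - X k ω) ^ 2|ℱ k] ≤ᵐ[μ] fun _ => γ * d ^ 2) :
    μ.real {ω | δ * d * n ≤ |X n ω - X 0 ω|} ≤
      2 * exp (-n * binKL ((δ + γ) / (1 + γ)) (γ / (1 + γ))) := by
  have hneg (i j : ℕ) (ω : Ω) : (-X) i ω - (-X) j ω = -(X i ω - X j ω) := by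
    simp only [Pi.neg_apply]; ring
  have hupper := hX.measureReal_ge_le_exp_neg_mul_binKL hγ hd hδ0 hδ1 hbdd hvar
  have hlower := hX.neg.measureReal_ge_le_exp_neg_mul_binKL hγ hd hδ0 hδ1
    (by simpa only [hneg, abs_neg] using hbdd) (by simpa only [hneg, neg_sq] using hvar)
  have hsplit : {ω | δ * d * n ≤ |X n ω - X 0 ω|} ⊆
      {ω | δ * d * n ≤ X n ω - X 0 ω} ∪ {ω | δ * d * n ≤ (-X) n ω - (-X) 0 ω} := by
    intro ω hω
    simpa only [Set.mem_union, Set.mem_ofPred_eq, hneg, ← le_abs] using hω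
  calc μ.real {ω | δ * d * n ≤ |X n ω - X 0 ω|}
      ≤ μ.real {ω | δ * d * n ≤ X n ω - X 0 ω}
        + μ.real {ω | δ * d * n ≤ (-X) n ω - (-X) 0 ω} :=
        (measureReal_mono hsplit).trans (measureReal_union_le _ _)
    _ ≤ 2 * exp (-n * binKL ((δ + γ) / (1 + γ)) (γ / (1 + γ))) := by linarith

end MeasureTheory.Martingale

/-- Refined Azuma inequality: for a martingale with jumps bounded by `d` and
conditional variances bounded by `σ²`, with `γ = σ²/d²`, `δ = α/d ≤ 1`,
`P(|Xₙ − X₀| ≥ αn) ≤ 2 exp(−n D((δ+γ)/(1+γ) ‖ γ/(1+γ)))`. -/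
theorem stmt_5 {Ω : Type*} {m0 : MeasurableSpace Ω} {μ : Measure Ω}
    [IsProbabilityMeasure μ] {ℱ : Filtration ℕ m0} {X : ℕ → Ω → ℝ}
    (hX : Martingale X ℱ μ) (n : ℕ) (d σ : ℝ) (hd : 0 < d) (hσ : 0 < σ)
    (hbdd : ∀ k, 1 ≤ k → k ≤ n → ∀ᵐ ω ∂μ, |X k ω - X (k - 1) ω| ≤ d)
    (hvar : ∀ k, 1 ≤ k → k ≤ n →
      ∀ᵐ ω ∂μ, (μ[fun ω' => (X k ω' - X (k - 1) ω') ^ 2 | ℱ (k - 1)]) ω ≤ σ ^ 2)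
    (α : ℝ) (hα : 0 ≤ α) (γ δ : ℝ) (hγ : γ = σ ^ 2 / d ^ 2) (hδ : δ = α / d)
    (hδ1 : δ ≤ 1) :
    μ {ω | α * n ≤ |X n ω - X 0 ω|} ≤
      ENNReal.ofReal
        (2 * Real.exp (-(n : ℝ) * binKL ((δ + γ) / (1 + γ)) (γ / (1 + γ)))) := by
  have hαδ : α = δ * d := by rw [hδ]; field_simp
  have hσγ : σ ^ 2 = γ * d ^ 2 := by rw [hγ]; field_simp
  rw [hαδ, ← ofReal_measureReal]
  refine ENNReal.ofReal_le_ofReal (hX.measureReal_abs_sub_ge_le_two_mul_exp_neg_mul_binKL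
    (by rw [hγ]; positivity) hd (by rw [hδ]; positivity) hδ1 (fun k hk => ?_) fun k hk => ?_)
  · simpa only [Nat.add_sub_cancel] using hbdd (k + 1) (by omega) hk
  · have hvar_k := hvar (k + 1) (by omega) hk
    simp only [Nat.add_sub_cancel, hσγ] at hvar_k
    exact hvar_k
end

section
/- Let {P_θ} for θ ∈ an open interval Θ ⊆ ℝ be a family of strictly positive probability mass functions on a finite alphabet X, with θ ↦ P_θ(x) twice continuously differentiable for each x. Then lim_{θ'→θ} C(P_θ, P_{θ'})/(θ − θ')² = J(θ)/8, where C(P,Q) = −min_{0≤t≤1} ln(Σ_x P(x)^{1−t} Q(x)^t) is the Chernoff information and J(θ) is the Fisher information. -/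
/-!
With `ℓₓ(s) = log P_s(x)` put `F(t, s) = log ∑ₓ P_θ(x) ^ (1 - t) P_s(x) ^ t`. The normalisation
`∑ₓ P_s(x) = 1`, differentiated once and twice, gives `∑ₓ P_θ ℓₓ' = 0` and
`∑ₓ P_θ (ℓₓ'' + ℓₓ'²) = 0` at `θ`; hence for every `t` the function `F(t, ·)` vanishes to first
order at `θ` and `∂ₛ²F(t, θ) = t(t - 1) J(θ)`. As `∂ₛ²F` is jointly continuous and `t` ranges over
the compact `[0, 1]`, the Taylor expansion `F(t, s) = t(t - 1) J(θ) (s - θ)² / 2 + o((s - θ)²)` is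
uniform in `t`, so `min_t F(t, s) = -J(θ) (s - θ)² / 8 + o((s - θ)²)`, the minimum of `t(t - 1)`
being attained at `t = 1/2`.
-/

open Filter

/-- Chernoff information `C(P,Q) = −min_{0≤t≤1} ln(Σ_x P(x)^{1−t} Q(x)^t)`. -/
noncomputable def chernoffInfo {𝒳 : Type*} [Fintype 𝒳] (P Q : 𝒳 → ℝ) : ℝ :=
  -sInf ((fun t : ℝ => Real.log (∑ x, P x ^ (1 - t) * Q x ^ t)) '' Set.Icc 0 1)

open Topology Set Real Function

theorem abs_le_mul_sq_of_abs_deriv2_le {φ φ' φ'' : ℝ → ℝ} {a b ε : ℝ}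
    (hφ : ∀ s ∈ uIcc a b, HasDerivAt φ (φ' s) s)
    (hφ' : ∀ s ∈ uIcc a b, HasDerivAt φ' (φ'' s) s)
    (h₀ : φ a = 0) (h₀' : φ' a = 0) (hbd : ∀ s ∈ uIcc a b, |φ'' s| ≤ ε) :
    |φ b| ≤ ε * (b - a) ^ 2 := by
  have hε : 0 ≤ ε := (abs_nonneg _).trans (hbd a left_mem_uIcc)
  have hφ'_le : ∀ s ∈ uIcc a b, ‖φ' s‖ ≤ ε * |b - a| := fun s hs => by
    have := (convex_uIcc a b).norm_image_sub_le_of_norm_hasDerivWithin_le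
      (fun s hs => (hφ' s hs).hasDerivWithinAt) hbd left_mem_uIcc hs
    rw [h₀', sub_zero] at this
    exact this.trans (mul_le_mul_of_nonneg_left (abs_sub_left_of_mem_uIcc hs) hε)
  have := (convex_uIcc a b).norm_image_sub_le_of_norm_hasDerivWithin_le
    (fun s hs => (hφ s hs).hasDerivWithinAt) hφ'_le left_mem_uIcc right_mem_uIcc
  rwa [h₀, sub_zero, Real.norm_eq_abs, Real.norm_eq_abs, mul_assoc, abs_mul_abs_self, ← sq] at this

theorem eventually_forall_abs_sub_taylor2_le {T U : Set ℝ} {θ ε : ℝ} {f f' f'' : ℝ → ℝ → ℝ}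
    (hT : IsCompact T) (hU : U ∈ 𝓝 θ)
    (hf : ∀ t ∈ T, ∀ s ∈ U, HasDerivAt (f t) (f' t s) s)
    (hf' : ∀ t ∈ T, ∀ s ∈ U, HasDerivAt (f' t) (f'' t s) s)
    (hcont : ContinuousOn (uncurry f'') (T ×ˢ U))
    (h₀ : ∀ t ∈ T, f t θ = 0) (h₀' : ∀ t ∈ T, f' t θ = 0) (hε : 0 < ε) :
    ∀ᶠ s in 𝓝 θ, ∀ t ∈ T, |f t s - f'' t θ * (s - θ) ^ 2 / 2| ≤ ε * (s - θ) ^ 2 := by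
  obtain ⟨v, hv, hvε⟩ := hT.mem_uniformity_of_prod (f := fun s t => f'' t s)
    (hcont.comp continuous_swap.continuousOn fun p hp => ⟨hp.2, hp.1⟩) (mem_of_mem_nhds hU)
    (Metric.dist_mem_uniformity hε)
  rw [nhdsWithin_eq_nhds.2 hU] at hv
  obtain ⟨δ, hδ, hball⟩ := Metric.mem_nhds_iff.1 (inter_mem hv hU)
  filter_upwards [Metric.ball_mem_nhds θ hδ] with s hs t ht
  have hsub : uIcc θ s ⊆ v ∩ U :=
    ((convex_ball θ δ).ordConnected.uIcc_subset (Metric.mem_ball_self hδ) hs).trans hball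
  refine abs_le_mul_sq_of_abs_deriv2_le (φ := fun u => f t u - f'' t θ * (u - θ) ^ 2 / 2)
    (φ' := fun u => f' t u - f'' t θ * (u - θ))
    (φ'' := fun u => f'' t u - f'' t θ) (fun u hu => ?_) (fun u hu => ?_) (by simp [h₀ t ht])
    (by simp [h₀' t ht]) fun u hu => (hvε u (hsub hu).1 t ht).le
  · have hq : HasDerivAt (fun u => f'' t θ * (u - θ) ^ 2 / 2) (f'' t θ * (u - θ)) u :=
      ((((hasDerivAt_id' u).sub_const θ).fun_pow 2).const_mul _ |>.div_const 2).congr_deriv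
        (by norm_num; ring)
    exact (hf t ht u (hsub hu).2).sub hq
  · have hq : HasDerivAt (fun u => f'' t θ * (u - θ)) (f'' t θ) u :=
      (((hasDerivAt_id' u).sub_const θ).const_mul _).congr_deriv (mul_one _)
    exact (hf' t ht u (hsub hu).2).sub hq

theorem ContDiffOn.hasDerivAt_deriv {f : ℝ → ℝ} {U : Set ℝ} {n : WithTop ℕ∞}
    (hf : ContDiffOn ℝ n f U) (hU : IsOpen U) (hn : 1 ≤ n) {s : ℝ} (hs : s ∈ U) :
    HasDerivAt f (deriv f s) s :=
  ((hf.contDiffAt (hU.mem_nhds hs)).differentiableAt (zero_lt_one.trans_le hn).ne').hasDerivAt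

theorem HasDerivAt.eq_zero_of_eventually_const {f : ℝ → ℝ} {f' x c : ℝ}
    (hf : HasDerivAt f f' x) (h : ∀ᶠ y in 𝓝 x, f y = c) : f' = 0 :=
  hf.unique ((hasDerivAt_const x c).congr_of_eventuallyEq h)

theorem abs_sInf_image_sub_le {f g : ℝ → ℝ} {T : Set ℝ} {m η : ℝ}
    (hm : IsLeast (g '' T) m) (hfg : ∀ t ∈ T, |f t - g t| ≤ η) :
    |sInf (f '' T) - m| ≤ η := by
  obtain ⟨⟨t₀, ht₀, rfl⟩, hlow⟩ := hm
  have hlow' : ∀ y ∈ f '' T, g t₀ - η ≤ y := by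
    rintro _ ⟨t, ht, rfl⟩
    linarith [hlow ⟨t, ht, rfl⟩, (abs_le.1 (hfg t ht)).1]
  rw [abs_le]
  constructor
  · linarith [le_csInf ⟨_, mem_image_of_mem f ht₀⟩ hlow']
  · linarith [csInf_le ⟨_, hlow'⟩ (mem_image_of_mem f ht₀), (abs_le.1 (hfg t₀ ht₀)).2]

theorem isLeast_image_mul_sub_one_mul {c : ℝ} (hc : 0 ≤ c) :
    IsLeast ((fun t => t * (t - 1) * c) '' Icc 0 1) (-c / 4) := by
  refine ⟨⟨1 / 2, by norm_num, by ring⟩, ?_⟩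
  rintro _ ⟨t, -, rfl⟩
  nlinarith [mul_nonneg (sq_nonneg (2 * t - 1)) hc]

section ChernoffCoeff

variable {𝒳 : Type*} [Fintype 𝒳] (ℓ ℓ' ℓ'' : 𝒳 → ℝ → ℝ) (θ : ℝ)

/-- `∑ x, P_θ(x) ^ (1 - t) * P_s(x) ^ t`, written in the coordinates `ℓ x s = log P_s(x)`. -/
noncomputable def chernoffCoeff (t s : ℝ) : ℝ :=
  ∑ x, exp ((1 - t) * ℓ x θ + t * ℓ x s)

noncomputable def chernoffCoeffDeriv (t s : ℝ) : ℝ :=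
  ∑ x, exp ((1 - t) * ℓ x θ + t * ℓ x s) * (t * ℓ' x s)

noncomputable def chernoffCoeffDeriv2 (t s : ℝ) : ℝ :=
  ∑ x, exp ((1 - t) * ℓ x θ + t * ℓ x s) * ((t * ℓ' x s) ^ 2 + t * ℓ'' x s)

variable {ℓ ℓ' ℓ'' θ}

theorem chernoffCoeff_pos [Nonempty 𝒳] (t s : ℝ) : 0 < chernoffCoeff ℓ θ t s :=
  Finset.sum_pos (fun _ _ => exp_pos _) Finset.univ_nonempty

theorem hasDerivAt_chernoffCoeff {s : ℝ} (hℓ : ∀ x, HasDerivAt (ℓ x) (ℓ' x s) s) (t : ℝ) :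
    HasDerivAt (chernoffCoeff ℓ θ t) (chernoffCoeffDeriv ℓ ℓ' θ t s) s :=
  HasDerivAt.fun_sum fun x _ => (((hℓ x).const_mul t).const_add _).exp

theorem hasDerivAt_chernoffCoeffDeriv {s : ℝ} (hℓ : ∀ x, HasDerivAt (ℓ x) (ℓ' x s) s)
    (hℓ' : ∀ x, HasDerivAt (ℓ' x) (ℓ'' x s) s) (t : ℝ) :
    HasDerivAt (chernoffCoeffDeriv ℓ ℓ' θ t) (chernoffCoeffDeriv2 ℓ ℓ' ℓ'' θ t s) s :=
  HasDerivAt.fun_sum fun x _ => ((((hℓ x).const_mul t).const_add _).exp.mul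
    ((hℓ' x).const_mul t)).congr_deriv (by ring)

theorem continuousOn_chernoffCoeff_logDeriv2 [Nonempty 𝒳] {U : Set ℝ}
    (hℓ : ∀ x, ContinuousOn (ℓ x) U) (hℓ' : ∀ x, ContinuousOn (ℓ' x) U)
    (hℓ'' : ∀ x, ContinuousOn (ℓ'' x) U) :
    ContinuousOn (uncurry fun t s =>
      (chernoffCoeffDeriv2 ℓ ℓ' ℓ'' θ t s * chernoffCoeff ℓ θ t s -
        chernoffCoeffDeriv ℓ ℓ' θ t s * chernoffCoeffDeriv ℓ ℓ' θ t s) / chernoffCoeff ℓ θ t s ^ 2)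
      (univ ×ˢ U) := by
  have hG (q : ℝ × ℝ) : chernoffCoeff ℓ θ q.1 q.2 ^ 2 ≠ 0 :=
    (pow_pos (chernoffCoeff_pos _ _) 2).ne'
  simp only [uncurry_def, chernoffCoeffDeriv2, chernoffCoeffDeriv, chernoffCoeff] at hG ⊢
  fun_prop (disch := first | exact fun q _ => hG q | (intro _ hq; exact (mem_prod.1 hq).2))

theorem chernoffCoeff_self (t : ℝ) : chernoffCoeff ℓ θ t θ = ∑ x, exp (ℓ x θ) := by
  simp only [chernoffCoeff, sub_mul, one_mul, sub_add_cancel]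

theorem chernoffCoeffDeriv_self (t : ℝ) :
    chernoffCoeffDeriv ℓ ℓ' θ t θ = t * ∑ x, exp (ℓ x θ) * ℓ' x θ := by
  simp only [chernoffCoeffDeriv, sub_mul, one_mul, sub_add_cancel, Finset.mul_sum]
  exact Finset.sum_congr rfl fun _ _ => by ring

theorem chernoffCoeffDeriv2_self (t : ℝ) :
    chernoffCoeffDeriv2 ℓ ℓ' ℓ'' θ t θ =
      t ^ 2 * ∑ x, exp (ℓ x θ) * ℓ' x θ ^ 2 + t * ∑ x, exp (ℓ x θ) * ℓ'' x θ := by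
  simp only [chernoffCoeffDeriv2, sub_mul, one_mul, sub_add_cancel, Finset.mul_sum,
    ← Finset.sum_add_distrib]
  exact Finset.sum_congr rfl fun _ _ => by ring

theorem sum_exp_mul_deriv_eq_zero {U : Set ℝ} (hU : IsOpen U)
    (hnorm : ∀ s ∈ U, ∑ x, exp (ℓ x s) = 1)
    (hℓ : ∀ x, ∀ s ∈ U, HasDerivAt (ℓ x) (ℓ' x s) s) {s : ℝ} (hs : s ∈ U) :
    ∑ x, exp (ℓ x s) * ℓ' x s = 0 :=
  (HasDerivAt.fun_sum fun x _ => (hℓ x s hs).exp).eq_zero_of_eventually_const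
    (eventually_of_mem (hU.mem_nhds hs) hnorm)

theorem sum_exp_mul_deriv2_eq_neg {U : Set ℝ} (hU : IsOpen U)
    (hnorm : ∀ s ∈ U, ∑ x, exp (ℓ x s) = 1)
    (hℓ : ∀ x, ∀ s ∈ U, HasDerivAt (ℓ x) (ℓ' x s) s)
    (hℓ' : ∀ x, ∀ s ∈ U, HasDerivAt (ℓ' x) (ℓ'' x s) s) {s : ℝ} (hs : s ∈ U) :
    ∑ x, exp (ℓ x s) * ℓ'' x s = -∑ x, exp (ℓ x s) * ℓ' x s ^ 2 := by
  have hscore : ∀ᶠ u in 𝓝 s, ∑ x, exp (ℓ x u) * ℓ' x u = 0 :=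
    eventually_of_mem (hU.mem_nhds hs) fun _ hu => sum_exp_mul_deriv_eq_zero hU hnorm hℓ hu
  have := (HasDerivAt.fun_sum fun x _ => (hℓ x s hs).exp.mul (hℓ' x s hs)
    ).eq_zero_of_eventually_const hscore
  rw [eq_neg_iff_add_eq_zero, ← Finset.sum_add_distrib, ← this]
  exact Finset.sum_congr rfl fun _ _ => by ring

theorem eventually_forall_abs_log_chernoffCoeff_sub_le {U : Set ℝ} (hU : IsOpen U) (hθ : θ ∈ U)
    (hℓ : ∀ x, ContDiffOn ℝ 2 (ℓ x) U) (hnorm : ∀ s ∈ U, ∑ x, exp (ℓ x s) = 1)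
    {ε : ℝ} (hε : 0 < ε) :
    ∀ᶠ s in 𝓝 θ, ∀ t ∈ Icc (0 : ℝ) 1,
      |log (chernoffCoeff ℓ θ t s) -
        t * (t - 1) * (∑ x, exp (ℓ x θ) * deriv (ℓ x) θ ^ 2) * (s - θ) ^ 2 / 2|
        ≤ ε * (s - θ) ^ 2 := by
  have : Nonempty 𝒳 := by
    by_contra h
    simpa [not_nonempty_iff.1 h] using hnorm θ hθ
  have hℓ₁ x : ContDiffOn ℝ 1 (deriv (ℓ x)) U := (hℓ x).deriv_of_isOpen hU le_rfl
  have hd x s (hs : s ∈ U) := (hℓ x).hasDerivAt_deriv hU (by norm_num) hs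
  have hd' x s (hs : s ∈ U) := (hℓ₁ x).hasDerivAt_deriv hU le_rfl hs
  set G := chernoffCoeff ℓ θ
  set G₁ := chernoffCoeffDeriv ℓ (fun x => deriv (ℓ x)) θ
  set G₂ := chernoffCoeffDeriv2 ℓ (fun x => deriv (ℓ x)) (fun x => deriv (deriv (ℓ x))) θ
  have hG₀ t : G t θ = 1 := (chernoffCoeff_self t).trans (hnorm θ hθ)
  have hG₁ t : G₁ t θ = 0 := (chernoffCoeffDeriv_self t).trans <| by
    rw [sum_exp_mul_deriv_eq_zero hU hnorm hd hθ, mul_zero]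
  have hG₂ t : G₂ t θ = t * (t - 1) * ∑ x, exp (ℓ x θ) * deriv (ℓ x) θ ^ 2 :=
    (chernoffCoeffDeriv2_self t).trans <| by
      rw [sum_exp_mul_deriv2_eq_neg hU hnorm hd hd' hθ]
      ring
  have hcont := continuousOn_chernoffCoeff_logDeriv2 (θ := θ) (fun x => (hℓ x).continuousOn)
    (fun x => (hℓ₁ x).continuousOn) fun x => (hℓ₁ x).continuousOn_deriv_of_isOpen hU le_rfl
  have hF t s (hs : s ∈ U) : HasDerivAt (fun u => log (G t u)) (G₁ t s / G t s) s :=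
    (hasDerivAt_chernoffCoeff (hd · s hs) t).log (chernoffCoeff_pos t s).ne'
  have hF' t s (hs : s ∈ U) : HasDerivAt (fun u => G₁ t u / G t u)
      ((G₂ t s * G t s - G₁ t s * G₁ t s) / G t s ^ 2) s :=
    (hasDerivAt_chernoffCoeffDeriv (hd · s hs) (hd' · s hs) t).div
      (hasDerivAt_chernoffCoeff (hd · s hs) t) (chernoffCoeff_pos t s).ne'
  filter_upwards [eventually_forall_abs_sub_taylor2_le isCompact_Icc (hU.mem_nhds hθ)
    (fun t _ => hF t) (fun t _ => hF' t) (hcont.mono (prod_mono (subset_univ _) le_rfl))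
    (fun t _ => by rw [hG₀, log_one]) (fun t _ => by rw [hG₁, zero_div]) hε] with s hs t ht
  have hs := hs t ht
  rwa [show (G₂ t θ * G t θ - G₁ t θ * G₁ t θ) / G t θ ^ 2 = G₂ t θ by
    rw [hG₀, hG₁]; ring, hG₂] at hs

theorem isLittleO_sInf_log_chernoffCoeff_add {U : Set ℝ} (hU : IsOpen U) (hθ : θ ∈ U)
    (hℓ : ∀ x, ContDiffOn ℝ 2 (ℓ x) U) (hnorm : ∀ s ∈ U, ∑ x, exp (ℓ x s) = 1) :
    (fun s => sInf ((fun t => log (chernoffCoeff ℓ θ t s)) '' Icc 0 1) +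
      (∑ x, exp (ℓ x θ) * deriv (ℓ x) θ ^ 2) * (s - θ) ^ 2 / 8) =o[𝓝 θ] fun s => (s - θ) ^ 2 := by
  refine Asymptotics.isLittleO_iff.2 fun ε hε => ?_
  filter_upwards [eventually_forall_abs_log_chernoffCoeff_sub_le hU hθ hℓ hnorm hε] with s hs
  have hJ : 0 ≤ (∑ x, exp (ℓ x θ) * deriv (ℓ x) θ ^ 2) * (s - θ) ^ 2 / 2 := by positivity
  rw [Real.norm_eq_abs, Real.norm_of_nonneg (sq_nonneg _)]
  convert abs_sInf_image_sub_le (isLeast_image_mul_sub_one_mul hJ)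
    (fun t ht => (hs t ht).trans_eq' (by ring_nf)) using 2
  ring

end ChernoffCoeff

theorem rpow_one_sub_mul_rpow {p q : ℝ} (hp : 0 < p) (hq : 0 < q) (t : ℝ) :
    p ^ (1 - t) * q ^ t = exp ((1 - t) * log p + t * log q) := by
  rw [rpow_def_of_pos hp, rpow_def_of_pos hq, ← exp_add, mul_comm (log p), mul_comm (log q)]

theorem chernoffInfo_eq_neg_sInf_log_chernoffCoeff {𝒳 : Type*} [Fintype 𝒳] {P : ℝ → 𝒳 → ℝ}
    {θ s : ℝ} (hθ : ∀ x, 0 < P θ x) (hs : ∀ x, 0 < P s x) :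
    chernoffInfo (P θ) (P s) =
      -sInf ((fun t => log (chernoffCoeff (fun x u => log (P u x)) θ t s)) '' Icc 0 1) := by
  simp only [chernoffInfo, chernoffCoeff, rpow_one_sub_mul_rpow (hθ _) (hs _)]

theorem stmt_18_general {𝒳 : Type*} [Fintype 𝒳] (Θ : Set ℝ) (hΘopen : IsOpen Θ)
    (P : ℝ → 𝒳 → ℝ)
    (hpos : ∀ θ ∈ Θ, ∀ x, 0 < P θ x) (hsum : ∀ θ ∈ Θ, ∑ x, P θ x = 1)
    (hsmooth : ∀ x, ContDiffOn ℝ 2 (fun θ => P θ x) Θ)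
    (θ : ℝ) (hθ : θ ∈ Θ) :
    Tendsto (fun θ' => chernoffInfo (P θ) (P θ') / (θ - θ') ^ 2)
      (nhdsWithin θ (Θ \ {θ}))
      (nhds ((∑ x, P θ x * (deriv (fun s => Real.log (P s x)) θ) ^ 2) / 8)) := by
  set ℓ : 𝒳 → ℝ → ℝ := fun x s => log (P s x)
  have hℓ x : ContDiffOn ℝ 2 (ℓ x) Θ := (hsmooth x).log fun s hs => (hpos s hs x).ne'
  have hnorm s (hs : s ∈ Θ) : ∑ x, exp (ℓ x s) = 1 := by
    simp only [ℓ, exp_log (hpos s hs _), hsum s hs]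
  have hJ : ∑ x, P θ x * deriv (ℓ x) θ ^ 2 = ∑ x, exp (ℓ x θ) * deriv (ℓ x) θ ^ 2 := by
    simp only [ℓ, exp_log (hpos θ hθ _)]
  have hC θ' (hθ' : θ' ∈ Θ) : chernoffInfo (P θ) (P θ') =
      -sInf ((fun t => log (chernoffCoeff ℓ θ t θ')) '' Icc 0 1) :=
    chernoffInfo_eq_neg_sInf_log_chernoffCoeff (hpos θ hθ) (hpos θ' hθ')
  have hrem := (isLittleO_sInf_log_chernoffCoeff_add hΘopen hθ hℓ hnorm).tendsto_div_nhds_zero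
  rw [hJ, ← sub_zero (_ / 8)]
  refine (tendsto_const_nhds.sub (hrem.mono_left nhdsWithin_le_nhds)).congr' ?_
  filter_upwards [self_mem_nhdsWithin] with θ' ⟨hθ'Θ, hne⟩
  have hne' : θ - θ' ≠ 0 := sub_ne_zero.2 (Ne.symm hne)
  rw [hC θ' hθ'Θ, ← neg_sq (θ' - θ), neg_sub]
  field_simp
  ring

/-- For a smooth family of strictly positive pmfs on a finite alphabet,
`C(P_θ, P_{θ'})/(θ − θ')² → J(θ)/8` as `θ' → θ`, where `J` is the Fisher
information. -/
theorem stmt_18 {𝒳 : Type*} [Fintype 𝒳] (Θ : Set ℝ) (hΘopen : IsOpen Θ)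
    (hΘconn : Θ.OrdConnected) (P : ℝ → 𝒳 → ℝ)
    (hpos : ∀ θ ∈ Θ, ∀ x, 0 < P θ x) (hsum : ∀ θ ∈ Θ, ∑ x, P θ x = 1)
    (hsmooth : ∀ x, ContDiffOn ℝ 2 (fun θ => P θ x) Θ)
    (θ : ℝ) (hθ : θ ∈ Θ) :
    Tendsto (fun θ' => chernoffInfo (P θ) (P θ') / (θ - θ') ^ 2)
      (nhdsWithin θ (Θ \ {θ}))
      (nhds ((∑ x, P θ x * (deriv (fun s => Real.log (P s x)) θ) ^ 2) / 8)) :=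
  stmt_18_general Θ hΘopen P hpos hsum hsmooth θ hθ
end
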